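/- arXiv:2105.13334 — 3 statements merged into one kernel-verified Lean document; each statement's English description precedes it below -/
import Mathlib

section
/- Let C and D be k-linear categories with finite-dimensional Hom-spaces admitting Serre functors (S_C, η_C) and (S_D, η_D) respectively, and let S_C^{-1} denote a chosen inverse equivalence of S_C. If F : C → D is a k-linear functor admitting a right adjoint F^R : D → C, then the composite functor S_C^{-1} ∘ F^R ∘ S_D : D → C is left adjoint to F. Equivalently, there are bijections Hom_D(y, F x) ≅ Hom_C(S_C^{-1} F^R S_D y, x), natural in x ∈ C and y ∈ D. -/
open CategoryTheory

universe v u v' u'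

section SerreAux

variable {k : Type} [Field k] {C : Type u} {D : Type u'} [Category.{v} C] [Category.{v'} D]
    [Preadditive C] [Linear k C] [Preadditive D] [Linear k D]
    (F : C ⥤ D) [F.Additive] [F.Linear k] (FR : D ⥤ C) (adj : F ⊣ FR)

/-- The adjunction hom-equivalence as a `k`-linear equivalence. -/
def serreHomLin (x : C) (d : D) : (x ⟶ FR.obj d) ≃ₗ[k] (F.obj x ⟶ d) where
  toFun g := F.map g ≫ adj.counit.app d
  map_add' g g' := by rw [F.map_add, Preadditive.add_comp]
  map_smul' r g := by rw [F.map_smul, Linear.smul_comp]; rfl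
  invFun := adj.homEquiv x d
  left_inv g := by
    change (adj.homEquiv x d) (F.map g ≫ adj.counit.app d) = g
    rw [← adj.homEquiv_counit x d g, Equiv.apply_symm_apply]
  right_inv χ := by
    change F.map ((adj.homEquiv x d) χ) ≫ adj.counit.app d = χ
    rw [← adj.homEquiv_counit x d ((adj.homEquiv x d) χ), Equiv.symm_apply_apply]

end SerreAux

/-- **Serre functors produce left adjoints.**
Let `C` and `D` be `k`-linear categories with finite-dimensional Hom-spaces admitting Serre
functors `(S_C, η_C)` and `(S_D, η_D)` (given here as self-equivalences `EC`, `ED`, so that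
`S_C = EC.functor` and the chosen inverse is `S_C⁻¹ = EC.inverse`).  If `F : C ⥤ D` is a
`k`-linear functor admitting a right adjoint `FR`, then `S_C⁻¹ ∘ F^R ∘ S_D : D ⥤ C`
(i.e. `ED.functor ⋙ FR ⋙ EC.inverse`) is left adjoint to `F`; an adjunction consists
precisely of bijections `Hom_D(y, F x) ≅ Hom_C(S_C⁻¹ F^R S_D y, x)` natural in both
variables. -/
theorem serre_left_adjoint
    {k : Type} [Field k] {C D : Type} [Category C] [Category D]
    [Preadditive C] [Linear k C] [Preadditive D] [Linear k D]
    [∀ a b : C, FiniteDimensional k (a ⟶ b)]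
    [∀ a b : D, FiniteDimensional k (a ⟶ b)]
    (EC : C ≌ C) [EC.functor.Additive] [EC.functor.Linear k]
    (ED : D ≌ D) [ED.functor.Additive] [ED.functor.Linear k]
    (ηC : ∀ a b : C, (a ⟶ b) ≃ₗ[k] Module.Dual k (b ⟶ EC.functor.obj a))
    (hηC : ∀ {a a' b b' : C} (f : a' ⟶ a) (g : b ⟶ b') (φ : a ⟶ b)
        (ψ : b' ⟶ EC.functor.obj a'),
      ηC a' b' (f ≫ φ ≫ g) ψ = ηC a b φ (g ≫ ψ ≫ EC.functor.map f))
    (ηD : ∀ a b : D, (a ⟶ b) ≃ₗ[k] Module.Dual k (b ⟶ ED.functor.obj a))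
    (hηD : ∀ {a a' b b' : D} (f : a' ⟶ a) (g : b ⟶ b') (φ : a ⟶ b)
        (ψ : b' ⟶ ED.functor.obj a'),
      ηD a' b' (f ≫ φ ≫ g) ψ = ηD a b φ (g ≫ ψ ≫ ED.functor.map f))
    (F : C ⥤ D) [F.Additive] [F.Linear k]
    (FR : D ⥤ C) (adj : F ⊣ FR) :
    Nonempty ((ED.functor ⋙ FR ⋙ EC.inverse) ⊣ F) := by
  -- Notation: `G` is the candidate left adjoint, `b y = FR (S_D y)`.
  set G : D ⥤ C := ED.functor ⋙ FR ⋙ EC.inverse with hG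
  -- the adjunction `EC.inverse ⊣ EC.functor`
  let eadj : EC.inverse ⊣ EC.functor := EC.symm.toAdjunction
  -- step 1: `(G.obj y ⟶ x) ≃ (FR (S_D y) ⟶ S_C x)`
  let e1 : ∀ (y : D) (x : C),
      (G.obj y ⟶ x) ≃ (FR.obj (ED.functor.obj y) ⟶ EC.functor.obj x) :=
    fun y x => eadj.homEquiv (FR.obj (ED.functor.obj y)) x
  -- the full hom-equivalence
  let h : ∀ (y : D) (x : C), (G.obj y ⟶ x) ≃ (y ⟶ F.obj x) := fun y x =>
    (e1 y x).trans <|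
      ((((Module.evalEquiv k (FR.obj (ED.functor.obj y) ⟶ EC.functor.obj x)).trans
          (ηC x (FR.obj (ED.functor.obj y))).dualMap).trans
        (serreHomLin F FR adj x (ED.functor.obj y)).symm.dualMap).trans
        (ηD y (F.obj x)).symm).toEquiv
  -- key computation of `ηD (h u)`
  have hkey : ∀ (y : D) (x : C) (u : G.obj y ⟶ x) (χ : F.obj x ⟶ ED.functor.obj y),
      ηD y (F.obj x) (h y x u) χ
        = ηC x (FR.obj (ED.functor.obj y)) (adj.homEquiv x (ED.functor.obj y) χ)
            (e1 y x u) := by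
    intro y x u χ
    show (ηD y (F.obj x)) ((ηD y (F.obj x)).symm _) χ = _
    rw [LinearEquiv.apply_symm_apply]
    rfl
  -- naturality of `h` in the right variable
  have natR : ∀ (y : D) {x x' : C} (u : G.obj y ⟶ x) (g : x ⟶ x'),
      h y x' (u ≫ g) = h y x u ≫ F.map g := by
    intro y x x' u g
    apply (ηD y (F.obj x')).injective
    apply LinearMap.ext
    intro ψ
    rw [hkey]
    have hR : (ηD y (F.obj x')) (h y x u ≫ F.map g) ψ
        = ηC x (FR.obj (ED.functor.obj y))
            (adj.homEquiv x (ED.functor.obj y) (F.map g ≫ ψ)) (e1 y x u) := by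
      have h1 : h y x u ≫ F.map g = 𝟙 y ≫ h y x u ≫ F.map g := by
        rw [Category.id_comp]
      rw [h1, hηD (𝟙 y) (F.map g) (h y x u) ψ, ED.functor.map_id, Category.comp_id, hkey]
    have h2 : e1 y x' (u ≫ g) = e1 y x u ≫ EC.functor.map g :=
      eadj.homEquiv_naturality_right u g
    rw [hR, h2]
    have h4 := hηC g (𝟙 (FR.obj (ED.functor.obj y))) ((adj.homEquiv x' (ED.functor.obj y)) ψ)
      (e1 y x u)
    rw [Category.comp_id, Category.id_comp] at h4
    rw [← h4, ← adj.homEquiv_naturality_left]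
  -- naturality of `h` in the left variable
  have natL : ∀ {y' y : D} (f : y' ⟶ y) (x : C) (u : G.obj y ⟶ x),
      h y' x (G.map f ≫ u) = f ≫ h y x u := by
    intro y' y f x u
    apply (ηD y' (F.obj x)).injective
    apply LinearMap.ext
    intro ψ
    rw [hkey]
    have hR : (ηD y' (F.obj x)) (f ≫ h y x u) ψ
        = ηC x (FR.obj (ED.functor.obj y))
            (adj.homEquiv x (ED.functor.obj y) (ψ ≫ ED.functor.map f)) (e1 y x u) := by
      have h1 : f ≫ h y x u = f ≫ h y x u ≫ 𝟙 (F.obj x) := by rw [Category.comp_id]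
      rw [h1, hηD f (𝟙 (F.obj x)) (h y x u) ψ, Category.id_comp, hkey]
    rw [hR]
    have h2 : e1 y' x (G.map f ≫ u)
        = FR.map (ED.functor.map f) ≫ e1 y x u :=
      eadj.homEquiv_naturality_left (FR.map (ED.functor.map f)) u
    rw [h2]
    have h5 := hηC (𝟙 x) (FR.map (ED.functor.map f)) ((adj.homEquiv x (ED.functor.obj y')) ψ)
      (e1 y x u)
    rw [Category.id_comp, EC.functor.map_id, Category.comp_id] at h5
    rw [← h5, ← adj.homEquiv_naturality_right]
  -- assemble the adjunction
  exact ⟨Adjunction.mkOfHomEquiv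
    { homEquiv := fun y x => h y x
      homEquiv_naturality_left_symm := by
        intro y' y x f w
        apply (h y' x).injective
        rw [Equiv.apply_symm_apply, natL f x ((h y x).symm w), Equiv.apply_symm_apply]
      homEquiv_naturality_right := by
        intro y x x' u g
        exact natR y u g }⟩
end

section
/- Let r be a natural number and χ : ℤ^r × ℤ^r → ℤ any bilinear form. Then there exists a bilinear form χ' on ℤ^r which is diagonal with respect to the standard basis (e_1, …, e_r), i.e. χ'(e_i, e_j) = 0 whenever i ≠ j, such that the Heisenberg algebras H(ℤ^r, χ) and H(ℤ^r, χ') are isomorphic as k-algebras. (In the paper this is deduced from the Smith normal form of the matrix of χ over ℤ.) -/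
/-! The Heisenberg algebra `H(M, χ)` of a lattice `(M, χ)` over a field `k` of
characteristic zero, presented by generators `p a n`, `q a n` (for `a : M`, `n : ℕ`)
and the relations of Khovanov type, constructed as a `RingQuot` of the free algebra. -/

/-- Formal generators `p_a^{(n)}` and `q_a^{(n)}` of the Heisenberg algebra. -/
inductive HeisenbergGen (M : Type) : Type
  | p : M → ℕ → HeisenbergGen M
  | q : M → ℕ → HeisenbergGen M

/-- The defining relations of the Heisenberg algebra `H(M, χ)`.  Here
`Ring.multichoose r i = (1/i!)·(r+i−1)(r+i−2)⋯(r+1)r` is the integer "multichoose"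
binomial coefficient `C(r+i−1, i)`. -/
inductive HeisenbergRel (k : Type) [Field k] (M : Type) [AddCommGroup M]
    (χ : M →ₗ[ℤ] M →ₗ[ℤ] ℤ) :
    FreeAlgebra k (HeisenbergGen M) → FreeAlgebra k (HeisenbergGen M) → Prop
  | p_zero (a : M) :
      HeisenbergRel k M χ (FreeAlgebra.ι k (HeisenbergGen.p a 0)) 1
  | q_zero (a : M) :
      HeisenbergRel k M χ (FreeAlgebra.ι k (HeisenbergGen.q a 0)) 1
  | p_add (a b : M) (n : ℕ) :
      HeisenbergRel k M χ (FreeAlgebra.ι k (HeisenbergGen.p (a + b) n))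
        (∑ i ∈ Finset.range (n + 1),
          FreeAlgebra.ι k (HeisenbergGen.p a i) * FreeAlgebra.ι k (HeisenbergGen.p b (n - i)))
  | q_add (a b : M) (n : ℕ) :
      HeisenbergRel k M χ (FreeAlgebra.ι k (HeisenbergGen.q (a + b) n))
        (∑ i ∈ Finset.range (n + 1),
          FreeAlgebra.ι k (HeisenbergGen.q a i) * FreeAlgebra.ι k (HeisenbergGen.q b (n - i)))
  | p_comm (a b : M) (n m : ℕ) :
      HeisenbergRel k M χ
        (FreeAlgebra.ι k (HeisenbergGen.p a n) * FreeAlgebra.ι k (HeisenbergGen.p b m))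
        (FreeAlgebra.ι k (HeisenbergGen.p b m) * FreeAlgebra.ι k (HeisenbergGen.p a n))
  | q_comm (a b : M) (n m : ℕ) :
      HeisenbergRel k M χ
        (FreeAlgebra.ι k (HeisenbergGen.q a n) * FreeAlgebra.ι k (HeisenbergGen.q b m))
        (FreeAlgebra.ι k (HeisenbergGen.q b m) * FreeAlgebra.ι k (HeisenbergGen.q a n))
  | qp (a b : M) (n m : ℕ) :
      HeisenbergRel k M χ
        (FreeAlgebra.ι k (HeisenbergGen.q a n) * FreeAlgebra.ι k (HeisenbergGen.p b m))
        (∑ i ∈ Finset.range (min m n + 1),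
          Ring.multichoose (χ a b) i •
            (FreeAlgebra.ι k (HeisenbergGen.p b (m - i)) *
              FreeAlgebra.ι k (HeisenbergGen.q a (n - i))))

/-- The Heisenberg algebra `H(M, χ)` as a quotient of the free `k`-algebra on the
generators by the two-sided ideal generated by the defining relations. -/
abbrev HeisenbergAlgebra (k : Type) [Field k] (M : Type) [AddCommGroup M]
    (χ : M →ₗ[ℤ] M →ₗ[ℤ] ℤ) : Type :=
  RingQuot (HeisenbergRel k M χ)

/-- The generator `p_a^{(n)}` of `H(M, χ)`. -/
noncomputable def HeisenbergAlgebra.pGen (k : Type) [Field k] (M : Type) [AddCommGroup M]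
    (χ : M →ₗ[ℤ] M →ₗ[ℤ] ℤ) (a : M) (n : ℕ) : HeisenbergAlgebra k M χ :=
  RingQuot.mkAlgHom k (HeisenbergRel k M χ) (FreeAlgebra.ι k (HeisenbergGen.p a n))

/-- The generator `q_a^{(n)}` of `H(M, χ)`. -/
noncomputable def HeisenbergAlgebra.qGen (k : Type) [Field k] (M : Type) [AddCommGroup M]
    (χ : M →ₗ[ℤ] M →ₗ[ℤ] ℤ) (a : M) (n : ℕ) : HeisenbergAlgebra k M χ :=
  RingQuot.mkAlgHom k (HeisenbergRel k M χ) (FreeAlgebra.ι k (HeisenbergGen.q a n))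

namespace HeisenbergAlgebra

variable (k : Type) [Field k] {M : Type} [AddCommGroup M] (χ : M →ₗ[ℤ] M →ₗ[ℤ] ℤ)

lemma pGen_zero (a : M) : pGen k M χ a 0 = 1 := by
  simpa [pGen] using RingQuot.mkAlgHom_rel k (HeisenbergRel.p_zero (k := k) (χ := χ) a)

lemma qGen_zero (a : M) : qGen k M χ a 0 = 1 := by
  simpa [qGen] using RingQuot.mkAlgHom_rel k (HeisenbergRel.q_zero (k := k) (χ := χ) a)

lemma pGen_add (a b : M) (n : ℕ) :
    pGen k M χ (a + b) n =
      ∑ i ∈ Finset.range (n + 1), pGen k M χ a i * pGen k M χ b (n - i) := by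
  simpa [pGen, map_sum, map_mul] using
    RingQuot.mkAlgHom_rel k (HeisenbergRel.p_add (k := k) (χ := χ) a b n)

lemma qGen_add (a b : M) (n : ℕ) :
    qGen k M χ (a + b) n =
      ∑ i ∈ Finset.range (n + 1), qGen k M χ a i * qGen k M χ b (n - i) := by
  simpa [qGen, map_sum, map_mul] using
    RingQuot.mkAlgHom_rel k (HeisenbergRel.q_add (k := k) (χ := χ) a b n)

lemma pGen_comm (a b : M) (n m : ℕ) :
    pGen k M χ a n * pGen k M χ b m = pGen k M χ b m * pGen k M χ a n := by
  simpa [pGen, map_mul] using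
    RingQuot.mkAlgHom_rel k (HeisenbergRel.p_comm (k := k) (χ := χ) a b n m)

lemma qGen_comm (a b : M) (n m : ℕ) :
    qGen k M χ a n * qGen k M χ b m = qGen k M χ b m * qGen k M χ a n := by
  simpa [qGen, map_mul] using
    RingQuot.mkAlgHom_rel k (HeisenbergRel.q_comm (k := k) (χ := χ) a b n m)

lemma qp_rel (a b : M) (n m : ℕ) :
    qGen k M χ a n * pGen k M χ b m =
      ∑ i ∈ Finset.range (min m n + 1),
        Ring.multichoose (χ a b) i • (pGen k M χ b (m - i) * qGen k M χ a (n - i)) := by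
  simpa [pGen, qGen, map_sum, map_mul] using
    RingQuot.mkAlgHom_rel k (HeisenbergRel.qp (k := k) (χ := χ) a b n m)

/-- The image of a generator under the map used to build `mapHom`. -/
noncomputable def genImage (A B : M →ₗ[ℤ] M) : HeisenbergGen M → HeisenbergAlgebra k M χ
  | .p a n => pGen k M χ (B a) n
  | .q a n => qGen k M χ (A a) n

noncomputable def mapHom (χ' : M →ₗ[ℤ] M →ₗ[ℤ] ℤ) (A B : M →ₗ[ℤ] M)
    (h : ∀ a b, χ' a b = χ (A a) (B b)) :
    HeisenbergAlgebra k M χ' →ₐ[k] HeisenbergAlgebra k M χ :=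
  RingQuot.liftAlgHom k ⟨FreeAlgebra.lift k (genImage k χ A B), by
    intro x y rel
    induction rel with
    | p_zero a => simp [FreeAlgebra.lift_ι_apply, genImage, pGen_zero]
    | q_zero a => simp [FreeAlgebra.lift_ι_apply, genImage, qGen_zero]
    | p_add a b n =>
        simp only [FreeAlgebra.lift_ι_apply, genImage, map_sum, map_mul, map_add]
        exact pGen_add k χ (B a) (B b) n
    | q_add a b n =>
        simp only [FreeAlgebra.lift_ι_apply, genImage, map_sum, map_mul, map_add]
        exact qGen_add k χ (A a) (A b) n
    | p_comm a b n m =>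
        simp only [FreeAlgebra.lift_ι_apply, genImage, map_mul]
        exact pGen_comm k χ _ _ n m
    | q_comm a b n m =>
        simp only [FreeAlgebra.lift_ι_apply, genImage, map_mul]
        exact qGen_comm k χ _ _ n m
    | qp a b n m =>
        simp only [FreeAlgebra.lift_ι_apply, genImage, map_sum, map_mul, map_zsmul]
        rw [qp_rel k χ (A a) (B b) n m]
        simp [h]⟩

lemma mapHom_pGen (χ' : M →ₗ[ℤ] M →ₗ[ℤ] ℤ) (A B : M →ₗ[ℤ] M)
    (h : ∀ a b, χ' a b = χ (A a) (B b)) (a : M) (n : ℕ) :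
    mapHom k χ χ' A B h (pGen k M χ' a n) = pGen k M χ (B a) n := by
  rw [pGen, mapHom, RingQuot.liftAlgHom_mkAlgHom_apply]
  simp [FreeAlgebra.lift_ι_apply, genImage]

lemma mapHom_qGen (χ' : M →ₗ[ℤ] M →ₗ[ℤ] ℤ) (A B : M →ₗ[ℤ] M)
    (h : ∀ a b, χ' a b = χ (A a) (B b)) (a : M) (n : ℕ) :
    mapHom k χ χ' A B h (qGen k M χ' a n) = qGen k M χ (A a) n := by
  rw [qGen, mapHom, RingQuot.liftAlgHom_mkAlgHom_apply]
  simp [FreeAlgebra.lift_ι_apply, genImage]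

noncomputable def mapEquiv (χ' : M →ₗ[ℤ] M →ₗ[ℤ] ℤ) (A B : M ≃ₗ[ℤ] M)
    (h : ∀ a b, χ' a b = χ (A a) (B b)) :
    HeisenbergAlgebra k M χ' ≃ₐ[k] HeisenbergAlgebra k M χ := by
  have h' : ∀ a b, χ a b = χ' (A.symm a) (B.symm b) := by
    intro a b; rw [h]; simp
  refine AlgEquiv.ofAlgHom (mapHom k χ χ' A.toLinearMap B.toLinearMap h)
    (mapHom k χ' χ A.symm.toLinearMap B.symm.toLinearMap h') ?_ ?_ <;>
  · apply RingQuot.ringQuot_ext'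
    apply FreeAlgebra.hom_ext
    funext g
    cases g <;>
      simp [Function.comp, pGen.eq_def, qGen.eq_def,
        ← pGen.eq_def, ← qGen.eq_def, mapHom_pGen, mapHom_qGen]

end HeisenbergAlgebra


open Module LinearMap

theorem exists_diag_bases (r : ℕ) (χ : (Fin r → ℤ) →ₗ[ℤ] (Fin r → ℤ) →ₗ[ℤ] ℤ) :
    ∃ (d c : Basis (Fin r) ℤ (Fin r → ℤ)),
      ∀ i j : Fin r, i ≠ j → χ (d i) (c j) = 0 := by
  classical
  set V := Fin r → ℤ
  set D := Module.Dual ℤ V with hD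
  let b0 : Basis (Fin r) ℤ D := (Pi.basisFun ℤ (Fin r)).dualBasis
  set N : Submodule ℤ D := LinearMap.range χ with hN
  obtain ⟨n, snf⟩ := N.smithNormalForm b0
  set ψ : V →ₗ[ℤ] N := χ.rangeRestrict with hψ
  have hψsurj : Function.Surjective ψ := LinearMap.surjective_rangeRestrict χ
  have hχψ : ∀ x : V, χ x = (ψ x : D) := fun x => rfl
  choose pre hpre using fun i => hψsurj (snf.bN i)
  set s : N →ₗ[ℤ] V := snf.bN.constr ℤ pre with hs
  have hsec : ∀ x : N, ψ (s x) = x := by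
    intro x
    have : ψ ∘ₗ s = LinearMap.id := snf.bN.ext fun i => by
      simp [hs, Basis.constr_basis, hpre]
    simpa using congrArg (fun f => f x) this
  have hsinj : Function.Injective s := fun x y hxy => by
    rw [← hsec x, ← hsec y, hxy]
  -- projection onto range of s
  have hmem : ∀ x : V, s (ψ x) ∈ LinearMap.range s := fun x => ⟨ψ x, rfl⟩
  set f0 : V →ₗ[ℤ] LinearMap.range s := (s ∘ₗ ψ).codRestrict _ hmem with hf0
  have hproj : ∀ x : LinearMap.range s, f0 x = x := by
    rintro ⟨_, y, rfl⟩
    ext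
    simp [hf0, hsec]
  have hcompl : IsCompl (LinearMap.range s) (LinearMap.ker f0) :=
    LinearMap.isCompl_of_proj hproj
  set K := LinearMap.ker f0 with hK
  have hKker : ∀ x : V, x ∈ K → χ x = 0 := by
    intro x hx
    have h1 : s (ψ x) = 0 := congrArg Subtype.val hx
    have h2 : ψ x = 0 := hsinj (by simpa using h1)
    rw [hχψ, h2]; rfl
  obtain ⟨m, bK⟩ := Submodule.basisOfPid (Pi.basisFun ℤ (Fin r)) K
  let bRange : Basis (Fin n) ℤ (LinearMap.range s) :=
    snf.bN.map (LinearEquiv.ofInjective s hsinj)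
  let bigBasis : Basis (Fin n ⊕ Fin m) ℤ V :=
    (bRange.prod bK).map (Submodule.prodEquivOfIsCompl _ _ hcompl)
  have hcard : n + m = r := by
    have h1 := Module.finrank_eq_card_basis bigBasis
    have h2 : Module.finrank ℤ V = r := Module.finrank_eq_card_basis (Pi.basisFun ℤ (Fin r)) |>.trans (by simp)
    simp only [Fintype.card_sum, Fintype.card_fin] at h1
    omega
  have hcardc : Fintype.card ((Set.range snf.f)ᶜ : Set (Fin r)) = m := by
    rw [Fintype.card_compl_set]
    rw [Set.card_range_of_injective snf.f.injective]
    simp; omega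
  let e2 : Fin m ≃ ((Set.range snf.f)ᶜ : Set (Fin r)) :=
    Fintype.equivOfCardEq (by simp [hcardc])
  let efun : Fin n ⊕ Fin m → Fin r := Sum.elim snf.f fun j => (e2 j : Fin r)
  have hinj : Function.Injective efun := by
    rintro (x | x) (y | y) hxy <;> simp [efun] at hxy
    · exact congrArg Sum.inl hxy
    · exact absurd ⟨x, hxy⟩ (e2 y).2
    · exact absurd ⟨y, hxy.symm⟩ (e2 x).2
    · exact congrArg Sum.inr (e2.injective (Subtype.ext hxy))
  have hbij : Function.Bijective efun := by
    rw [Fintype.bijective_iff_injective_and_card]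
    exact ⟨hinj, by simp [hcard]⟩
  let e : (Fin n ⊕ Fin m) ≃ Fin r := Equiv.ofBijective efun hbij
  let d : Basis (Fin r) ℤ V := bigBasis.reindex e
  let c : Basis (Fin r) ℤ V :=
    snf.bM.dualBasis.map (Module.evalEquiv ℤ V).symm
  have hc : ∀ (t j : Fin r), snf.bM t (c j) = if t = j then 1 else 0 := by
    intro t j
    have : snf.bM t (c j) = Module.evalEquiv ℤ V (c j) (snf.bM t) := rfl
    rw [this]
    simp only [c, Basis.map_apply, LinearEquiv.apply_symm_apply]
    rw [Basis.dualBasis_apply_self]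
  have hd : ∀ z : Fin n ⊕ Fin m, d (e z) = bigBasis z := by
    intro z; simp [d, Basis.reindex_apply]
  refine ⟨d, c, ?_⟩
  intro i j hij
  obtain ⟨z, rfl⟩ := e.surjective i
  rw [hd]
  cases z with
  | inl t =>
      have hbig : bigBasis (Sum.inl t) = (s (snf.bN t) : V) := by
        simp [bigBasis, Basis.map_apply, Basis.prod_apply,
          Submodule.coe_prodEquivOfIsCompl', bRange, LinearEquiv.ofInjective_apply]
      rw [hbig]
      have hval : χ (s (snf.bN t)) = (snf.a t) • snf.bM (snf.f t) := by
        rw [hχψ, hsec, snf.snf]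
      rw [hval]
      have hne : snf.f t ≠ j := by
        intro hcontra
        apply hij
        simp only [e, Equiv.ofBijective_apply, efun, Sum.elim_inl] at *
        exact hcontra
      rw [LinearMap.smul_apply, hc, if_neg hne, smul_zero]
  | inr t =>
      have hbig : bigBasis (Sum.inr t) ∈ K := by
        simp [bigBasis, Basis.map_apply, Basis.prod_apply,
          Submodule.coe_prodEquivOfIsCompl']
      rw [hKker _ hbig]
      rfl

/-- **Every Heisenberg algebra is isomorphic to one induced by a diagonal form.**
Let `χ` be any bilinear form on `ℤ^r`.  Then there exists a bilinear form `χ'` on `ℤ^r`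
which is diagonal with respect to the standard basis (`χ'(e_i, e_j) = 0` for `i ≠ j`)
such that the Heisenberg algebras `H(ℤ^r, χ)` and `H(ℤ^r, χ')` are isomorphic as
`k`-algebras.  (In the paper this follows from the Smith normal form of the matrix of
`χ` over `ℤ`.) -/

theorem heisenbergAlgebra_iso_diagonal
    (k : Type) [Field k] [CharZero k] (r : ℕ)
    (χ : (Fin r → ℤ) →ₗ[ℤ] (Fin r → ℤ) →ₗ[ℤ] ℤ) :
    ∃ χ' : (Fin r → ℤ) →ₗ[ℤ] (Fin r → ℤ) →ₗ[ℤ] ℤ,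
      (∀ i j : Fin r, i ≠ j → χ' (Pi.single i 1) (Pi.single j 1) = 0) ∧
      Nonempty (HeisenbergAlgebra k (Fin r → ℤ) χ ≃ₐ[k] HeisenbergAlgebra k (Fin r → ℤ) χ') := by
  classical
  obtain ⟨d, c, hdc⟩ := exists_diag_bases r χ
  let A : (Fin r → ℤ) ≃ₗ[ℤ] (Fin r → ℤ) := (Pi.basisFun ℤ (Fin r)).equiv d (Equiv.refl _)
  let B : (Fin r → ℤ) ≃ₗ[ℤ] (Fin r → ℤ) := (Pi.basisFun ℤ (Fin r)).equiv c (Equiv.refl _)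
  refine ⟨χ.compl₁₂ A.toLinearMap B.toLinearMap, ?_, ?_⟩
  · intro i j hij
    rw [LinearMap.compl₁₂_apply]
    have hA : A (Pi.single i 1) = d i := by
      simpa using (Pi.basisFun ℤ (Fin r)).equiv_apply i d (Equiv.refl _)
    have hB : B (Pi.single j 1) = c j := by
      simpa using (Pi.basisFun ℤ (Fin r)).equiv_apply j c (Equiv.refl _)
    rw [LinearEquiv.coe_coe, LinearEquiv.coe_coe, hA, hB]
    exact hdc i j hij
  · exact ⟨(HeisenbergAlgebra.mapEquiv k χ _ A B (fun a b => by
      rw [LinearMap.compl₁₂_apply]; rfl)).symm⟩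
end

section
/- For all natural numbers k and ℓ with 2 ≤ ℓ ≤ k + 1, the following identity of natural numbers holds: ℓ!·C(k,ℓ)² + (ℓ−1)!·C(k,ℓ−1)²·(2(k−ℓ+1)+1) + (ℓ−2)!·C(k,ℓ−2)²·(k−ℓ+2)² = ℓ!·C(k+1,ℓ)². -/
/-- **Coefficient identity for the categorified Heisenberg relations (symmetric case).**
For all natural numbers `k` and `ℓ` with `2 ≤ ℓ ≤ k + 1`,
`ℓ!·C(k,ℓ)² + (ℓ−1)!·C(k,ℓ−1)²·(2(k−ℓ+1)+1) + (ℓ−2)!·C(k,ℓ−2)²·(k−ℓ+2)² = ℓ!·C(k+1,ℓ)²`.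
(Since `ℓ ≤ k + 1`, the natural-number expressions `k + 1 - ℓ` and `k + 2 - ℓ` compute the
integer values `k − ℓ + 1` and `k − ℓ + 2` respectively.) -/
theorem heisenberg_coefficient_identity_symmetric (k ℓ : ℕ) (h2 : 2 ≤ ℓ) (hk : ℓ ≤ k + 1) :
    Nat.factorial ℓ * Nat.choose k ℓ ^ 2
      + Nat.factorial (ℓ - 1) * Nat.choose k (ℓ - 1) ^ 2 * (2 * (k + 1 - ℓ) + 1)
      + Nat.factorial (ℓ - 2) * Nat.choose k (ℓ - 2) ^ 2 * (k + 2 - ℓ) ^ 2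
    = Nat.factorial ℓ * Nat.choose (k + 1) ℓ ^ 2 := by
  obtain ⟨m, rfl⟩ : ∃ m, ℓ = m + 2 := ⟨ℓ - 2, by omega⟩
  obtain ⟨a, rfl⟩ : ∃ a, k = m + 1 + a := ⟨k - (m + 1), by omega⟩
  have e1 : m + 2 - 1 = m + 1 := by omega
  have e2 : m + 2 - 2 = m := by omega
  have e3 : m + 1 + a + 1 - (m + 2) = a := by omega
  have e4 : m + 1 + a + 2 - (m + 2) = a + 1 := by omega
  rw [e1, e2, e3, e4]
  set K := m + 1 + a with hK
  -- pascal
  have hD : Nat.choose (K + 1) (m + 2) = Nat.choose K (m + 1) + Nat.choose K (m + 2) :=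
    Nat.choose_succ_succ' K (m + 1)
  -- absorption identities
  have h1 : Nat.choose K (m + 2) * (m + 2) = Nat.choose K (m + 1) * a := by
    have := Nat.choose_succ_right_eq K (m + 1)
    simpa [hK, show m + 1 + a - (m + 1) = a by omega] using this
  have h2' : Nat.choose K (m + 1) * (m + 1) = Nat.choose K m * (a + 1) := by
    have := Nat.choose_succ_right_eq K m
    simpa [hK, show m + 1 + a - m = a + 1 by omega] using this
  rw [hD]
  rw [Nat.factorial_succ (m + 1), Nat.factorial_succ m]
  zify at h1 h2' ⊢
  set f := (Nat.factorial m : ℤ)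
  set A := (Nat.choose K m : ℤ)
  set B := (Nat.choose K (m + 1) : ℤ)
  set C := (Nat.choose K (m + 2) : ℤ)
  linear_combination (-(f * (B * (m + 1) + A * (a + 1)))) * h2'
    + (-(2 * f * (m + 1) * B)) * h1
end
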